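/- With Poisson structure H = [[−(1/3)D, D² + 2D∘u], [−D² + 2uD, 4zD + 2z_x]] and density h = z(u_x + (1/2)u² + (1/3)z), the Hamiltonian vector field H·δ∫h dx equals the right-hand side of system (3.5a): its first component is u_{xxx} + 3u u_{xx} + 3u² u_x + 3u_x² + (z_x + u z)_x and its second component is z_{xxx} + 3(u_x z − u z_x + u² z)_x + 4 z z_x. -/

import Mathlib

/-- First component of the matrix operator `H` applied to a pair `(f, g)`:
`−(1/3) D f + D² g + 2 D(u g)`. -/
noncomputable def Hop1 (u : ℝ → ℝ) (f g : ℝ → ℝ) : ℝ → ℝ := fun x =>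
  -(1/3) * deriv f x + deriv (deriv g) x + 2 * deriv (fun y => u y * g y) x

/-- Second component of `H` applied to `(f, g)`:
`−D² f + 2 u D f + 4 z D g + 2 z_x g`. -/
noncomputable def Hop2 (u z : ℝ → ℝ) (f g : ℝ → ℝ) : ℝ → ℝ := fun x =>
  -deriv (deriv f) x + 2 * u x * deriv f x + 4 * z x * deriv g x
    + 2 * deriv z x * g x

/-- Applying the Poisson structure `H` to the variational derivatives
`(z u − z_x, u_x + u²/2 + (2/3) z)` of the Hamiltonian density yields
exactly the right-hand side of system (3.5a). -/
theorem hamiltonian_form_35a (u z : ℝ → ℝ)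
    (hu : ContDiff ℝ (⊤ : ℕ∞) u) (hz : ContDiff ℝ (⊤ : ℕ∞) z) :
    ∀ x : ℝ,
      (Hop1 u (fun y => z y * u y - deriv z y)
          (fun y => deriv u y + (1/2) * (u y)^2 + (2/3) * z y) x
        = deriv (deriv (deriv u)) x + 3 * u x * deriv (deriv u) x
          + 3 * (u x)^2 * deriv u x + 3 * (deriv u x)^2
          + deriv (fun y => deriv z y + u y * z y) x)
      ∧
      (Hop2 u z (fun y => z y * u y - deriv z y)
          (fun y => deriv u y + (1/2) * (u y)^2 + (2/3) * z y) x
        = deriv (deriv (deriv z)) x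
          + 3 * deriv (fun y => deriv u y * z y - u y * deriv z y
              + (u y)^2 * z y) x
          + 4 * z x * deriv z x) := by
  have hu0 : ContDiff ℝ (⊤ : ℕ∞) u := hu.of_le (by simp)
  have hz0 : ContDiff ℝ (⊤ : ℕ∞) z := hz.of_le (by simp)
  have hu1 : ContDiff ℝ (⊤ : ℕ∞) (deriv u) := (contDiff_infty_iff_deriv.mp hu0).2
  have hu2 : ContDiff ℝ (⊤ : ℕ∞) (deriv (deriv u)) := (contDiff_infty_iff_deriv.mp hu1).2
  have hz1 : ContDiff ℝ (⊤ : ℕ∞) (deriv z) := (contDiff_infty_iff_deriv.mp hz0).2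
  have hz2 : ContDiff ℝ (⊤ : ℕ∞) (deriv (deriv z)) := (contDiff_infty_iff_deriv.mp hz1).2
  have d0 : Differentiable ℝ u := hu0.differentiable (by simp)
  have d1 : Differentiable ℝ (deriv u) := hu1.differentiable (by simp)
  have d2 : Differentiable ℝ (deriv (deriv u)) := hu2.differentiable (by simp)
  have e0 : Differentiable ℝ z := hz0.differentiable (by simp)
  have e1 : Differentiable ℝ (deriv z) := hz1.differentiable (by simp)
  have e2 : Differentiable ℝ (deriv (deriv z)) := hz2.differentiable (by simp)
  -- derivative of f = z u - z'
  have hf : deriv (fun y => z y * u y - deriv z y)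
      = fun y => deriv z y * u y + z y * deriv u y - deriv (deriv z) y := by
    funext y
    erw [deriv_fun_sub ((e0.mul d0) y) (e1 y), deriv_fun_mul (e0 y) (d0 y)]
  -- derivative of g
  have hg' : deriv (fun y => deriv u y + (1/2) * (u y)^2 + (2/3) * z y)
      = fun y => deriv (deriv u) y + u y * deriv u y + (2/3) * deriv z y := by
    funext y
    have hre : (fun y => deriv u y + (1/2) * (u y)^2 + (2/3) * z y)
        = fun y => (deriv u y + (1/2) * (u y * u y)) + (2/3) * z y := by
      funext w; ring
    erw [hre, deriv_fun_add ((d1 y).add ((differentiableAt_const _).mul ((d0 y).mul (d0 y))))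
          ((differentiableAt_const _).mul (e0 y)),
        deriv_fun_add (d1 y) ((differentiableAt_const _).mul ((d0 y).mul (d0 y))),
        deriv_const_mul _ ((d0 y).mul (d0 y)), deriv_const_mul _ (e0 y),
        deriv_fun_mul (d0 y) (d0 y)]
    ring
  intro x
  have A1 : deriv (fun y => z y * u y - deriv z y) x
      = deriv z x * u x + z x * deriv u x - deriv (deriv z) x := by
    rw [hf]
  have A2 : deriv (deriv (fun y => z y * u y - deriv z y)) x
      = (deriv (deriv z) x * u x + deriv z x * deriv u x)
        + (deriv z x * deriv u x + z x * deriv (deriv u) x)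
        - deriv (deriv (deriv z)) x := by
    erw [hf, deriv_fun_sub (((e1.mul d0).add (e0.mul d1)) x) (e2 x),
        deriv_fun_add ((e1.mul d0) x) ((e0.mul d1) x),
        deriv_fun_mul (e1 x) (d0 x), deriv_fun_mul (e0 x) (d1 x)]
  have A3 : deriv (fun y => deriv u y + (1/2) * (u y)^2 + (2/3) * z y) x
      = deriv (deriv u) x + u x * deriv u x + (2/3) * deriv z x := by
    rw [hg']
  have A4 : deriv (deriv (fun y => deriv u y + (1/2) * (u y)^2 + (2/3) * z y)) x
      = deriv (deriv (deriv u)) x + (deriv u x * deriv u x + u x * deriv (deriv u) x)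
        + (2/3) * deriv (deriv z) x := by
    erw [hg', deriv_fun_add ((d2.add (d0.mul d1)) x) (((differentiable_const _).mul e1) x),
        deriv_fun_add (d2 x) ((d0.mul d1) x), deriv_fun_mul (d0 x) (d1 x),
        deriv_const_mul _ (e1 x)]
  have hG : DifferentiableAt ℝ (fun y => deriv u y + (1/2) * (u y)^2 + (2/3) * z y) x :=
    ((d1.add ((differentiable_const _).mul (d0.pow 2))).add
      ((differentiable_const _).mul e0)) x
  have A5 : deriv (fun y => u y * (deriv u y + (1/2) * (u y)^2 + (2/3) * z y)) x
      = deriv u x * (deriv u x + (1/2) * (u x)^2 + (2/3) * z x)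
        + u x * (deriv (deriv u) x + u x * deriv u x + (2/3) * deriv z x) := by
    rw [deriv_fun_mul (d0 x) hG, hg']
  have B1 : deriv (fun y => deriv z y + u y * z y) x
      = deriv (deriv z) x + (deriv u x * z x + u x * deriv z x) := by
    erw [deriv_fun_add (e1 x) ((d0.mul e0) x), deriv_fun_mul (d0 x) (e0 x)]
  have B2 : deriv (fun y => deriv u y * z y - u y * deriv z y + (u y)^2 * z y) x
      = (deriv (deriv u) x * z x + deriv u x * deriv z x)
        - (deriv u x * deriv z x + u x * deriv (deriv z) x)
        + ((deriv u x * u x + u x * deriv u x) * z x + u x * u x * deriv z x) := by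
    have hre : (fun y => deriv u y * z y - u y * deriv z y + (u y)^2 * z y)
        = fun y => (deriv u y * z y - u y * deriv z y) + (u y * u y) * z y := by
      funext w; ring
    erw [hre, deriv_fun_add (((d1.mul e0).sub (d0.mul e1)) x) (((d0.mul d0).mul e0) x),
        deriv_fun_sub ((d1.mul e0) x) ((d0.mul e1) x), deriv_fun_mul (d1 x) (e0 x),
        deriv_fun_mul (d0 x) (e1 x), deriv_fun_mul ((d0.mul d0) x) (e0 x),
        deriv_fun_mul (d0 x) (d0 x)]
    rfl
  constructor
  · simp only [Hop1]
    rw [A1, A4, A5, B1]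
    ring
  · simp only [Hop2]
    rw [A1, A2, A3, B2]
    ring
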